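/- arXiv:2410.19400 — 2 statements merged into one kernel-verified Lean document; each statement's English description precedes it below -/
import Mathlib

section
/- In the deterministic tabular setting, the value-aware policy π* globally maximizes the regularizer R̄₁: for every policy π, R̄₁(π) ≤ R̄₁(π*), the inequality holding in the extended reals; moreover R̄₁(π*) is a real number (in particular R̄₁(π*) > −∞). -/
open scoped BigOperators Classical

/-- Extended-real logarithm of a (nonnegative) real number, with `elog 0 = ⊥` (i.e. `log 0 = -∞`).
Note that in `EReal` we have `0 * ⊥ = 0`, matching the convention `0·(−∞) = 0`. -/
noncomputable def elog (x : ℝ) : EReal := if x = 0 then ⊥ else ((Real.log x : ℝ) : EReal)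

/-- The regularizer
`R̄₁(π) = Σ_s d(s)·Σ_{s'} N(s'|s)·exp(α(V(s')−V(s)))·log(Σ_a π(a|s)·𝟙[f(s,a)=s'])`,
valued in the extended reals. -/
noncomputable def Rbar1Det {S A : Type*} [Fintype S] [Fintype A]
    (d : S → ℝ) (N : S → S → ℝ) (V : S → ℝ) (α : ℝ)
    (f : S → A → S) (π : S → A → ℝ) : EReal :=
  ∑ s, (d s : EReal) *
    ∑ s', ((N s s' * Real.exp (α * (V s' - V s)) : ℝ) : EReal) *
      elog (∑ a, π s a * (if f s a = s' then (1 : ℝ) else 0))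

/-!
Write `P_π(s'|s) = Σ_a π(a|s)·𝟙[f(s,a) = s']` for the next-state distribution of `π`. Then
`P_{π*}(·|s) = exp(α V(·))·N(·|s)/Z(s)`, so the weights of `R̄₁` are
`N(s'|s)·exp(α(V(s') − V(s))) = K(s)·P_{π*}(s'|s)` with `K(s) = exp(−α V(s))·Z(s) > 0`.
Each inner sum of `R̄₁(π)` is therefore `K(s)` times the cross entropy of `P_π(·|s)` relative to
`P_{π*}(·|s)`, which Gibbs' inequality bounds by the same expression for `π*`; the latter is finite
because `P_{π*}(s'|s)` vanishes exactly where its weight does.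
-/

theorem EReal.coe_finset_sum {ι : Type*} (s : Finset ι) (g : ι → ℝ) :
    ((∑ i ∈ s, g i : ℝ) : EReal) = ∑ i ∈ s, (g i : EReal) :=
  map_sum (⟨⟨Real.toEReal, EReal.coe_zero⟩, EReal.coe_add⟩ : ℝ →+ EReal) g s

theorem coe_mul_elog {w x : ℝ} (h : x = 0 → w = 0) :
    (w : EReal) * elog x = ((w * Real.log x : ℝ) : EReal) := by
  by_cases hx : x = 0
  · simp [h hx]
  · rw [elog, if_neg hx, EReal.coe_mul]

theorem mul_log_sub_mul_log_le {p q : ℝ} (hp : 0 ≤ p) (hq : 0 ≤ q) (hpq : 0 < q → 0 < p) :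
    q * Real.log p - q * Real.log q ≤ p - q := by
  rcases hq.eq_or_lt with rfl | hq
  · simpa using hp
  have hp := hpq hq
  calc q * Real.log p - q * Real.log q = q * Real.log (p / q) := by
        rw [Real.log_div hp.ne' hq.ne']; ring
    _ ≤ q * (p / q - 1) := by gcongr; exact Real.log_le_sub_one_of_pos (div_pos hp hq)
    _ = p - q := by field_simp

/-- **Gibbs' inequality**. -/
theorem sum_mul_log_le_sum_mul_log {ι : Type*} (s : Finset ι) {p q : ι → ℝ}
    (hp : ∀ i ∈ s, 0 ≤ p i) (hq : ∀ i ∈ s, 0 ≤ q i) (hpq : ∀ i ∈ s, 0 < q i → 0 < p i)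
    (hsum : ∑ i ∈ s, p i ≤ ∑ i ∈ s, q i) :
    ∑ i ∈ s, q i * Real.log (p i) ≤ ∑ i ∈ s, q i * Real.log (q i) := by
  have h := Finset.sum_le_sum fun i hi =>
    mul_log_sub_mul_log_le (hp i hi) (hq i hi) (hpq i hi)
  rw [Finset.sum_sub_distrib, Finset.sum_sub_distrib] at h
  linarith

theorem sum_coe_mul_elog_self {ι : Type*} [Fintype ι] (K : ℝ) (q : ι → ℝ) :
    ∑ i, ((K * q i : ℝ) : EReal) * elog (q i) = ((∑ i, K * q i * Real.log (q i) : ℝ) : EReal) := by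
  rw [EReal.coe_finset_sum]
  exact Finset.sum_congr rfl fun i _ => coe_mul_elog fun h => by rw [h, mul_zero]

theorem sum_coe_mul_elog_le {ι : Type*} [Fintype ι] {K : ℝ} (hK : 0 < K) {p q : ι → ℝ}
    (hp : ∀ i, 0 ≤ p i) (hq : ∀ i, 0 ≤ q i) (hsum : ∑ i, p i ≤ ∑ i, q i) :
    ∑ i, ((K * q i : ℝ) : EReal) * elog (p i) ≤ ∑ i, ((K * q i : ℝ) : EReal) * elog (q i) := by
  by_cases hpq : ∃ i, 0 < q i ∧ p i = 0
  · obtain ⟨i, hqi, hpi⟩ := hpq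
    have hbot : ((K * q i : ℝ) : EReal) * elog (p i) = ⊥ := by
      rw [elog, if_pos hpi]
      exact EReal.coe_mul_bot_of_pos (mul_pos hK hqi)
    rw [← Finset.add_sum_erase _ _ (Finset.mem_univ i), hbot, EReal.bot_add]
    exact bot_le
  push Not at hpq
  have hpq' : ∀ i, 0 < q i → 0 < p i := fun i hqi => (hp i).lt_of_ne' (hpq i hqi)
  have hcoe (i : ι) :
      ((K * q i : ℝ) : EReal) * elog (p i) = ((K * q i * Real.log (p i) : ℝ) : EReal) := coe_mul_elog fun hpi =>
      by_contra fun hne => (hpq' i ((hq i).lt_of_ne' (right_ne_zero_of_mul hne))).ne' hpi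
  simp only [hcoe, sum_coe_mul_elog_self, ← EReal.coe_finset_sum, EReal.coe_le_coe_iff,
    mul_assoc, ← Finset.mul_sum]
  exact mul_le_mul_of_nonneg_left (sum_mul_log_le_sum_mul_log _ (fun i _ => hp i)
    (fun i _ => hq i) (fun i _ => hpq' i) hsum) hK.le

section NextState

variable {S A : Type*} [Fintype A]

noncomputable def nextStateProb (f : S → A → S) (π : S → A → ℝ) (s s' : S) : ℝ :=
  ∑ a, π s a * if f s a = s' then 1 else 0

theorem nextStateProb_nonneg (f : S → A → S) {π : S → A → ℝ} {s : S} (hπ : ∀ a, 0 ≤ π s a)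
    (s' : S) : 0 ≤ nextStateProb f π s s' :=
  Finset.sum_nonneg fun a _ => mul_nonneg (hπ a) (by split_ifs <;> norm_num)

theorem sum_nextStateProb [Fintype S] (f : S → A → S) (π : S → A → ℝ) (s : S) :
    ∑ s', nextStateProb f π s s' = ∑ a, π s a := by
  simp only [nextStateProb, Finset.sum_comm (γ := S), ← Finset.mul_sum, Finset.sum_ite_eq,
    Finset.mem_univ, if_true, mul_one]

theorem nextStateProb_mul_comp (f : S → A → S) (g : S → S → ℝ) (β : S → A → ℝ) (s s' : S) :
    nextStateProb f (fun s a => g s (f s a) * β s a) s s' = g s s' * nextStateProb f β s s' := by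
  rw [nextStateProb, nextStateProb, Finset.mul_sum]
  refine Finset.sum_congr rfl fun a _ => ?_
  split_ifs with h
  · rw [h]; ring
  · ring

theorem sum_mul_nextStateProb_pos [Fintype S] (f : S → A → S) {β : S → A → ℝ} {s : S}
    (hβ0 : ∀ a, 0 ≤ β s a) (hβ1 : ∑ a, β s a = 1) {g : S → ℝ} (hg : ∀ s', 0 < g s') :
    0 < ∑ s', g s' * nextStateProb f β s s' := by
  have hP := nextStateProb_nonneg f hβ0
  have hP_sum : ∑ s', nextStateProb f β s s' ≠ 0 := by
    rw [sum_nextStateProb, hβ1]; exact one_ne_zero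
  obtain ⟨s', -, hs'⟩ := Finset.exists_ne_zero_of_sum_ne_zero hP_sum
  exact Finset.sum_pos' (fun s' _ => mul_nonneg (hg s').le (hP s'))
    ⟨s', Finset.mem_univ _, mul_pos (hg s') ((hP s').lt_of_ne' hs')⟩

variable [Fintype S] {d : S → ℝ} {N : S → S → ℝ} {V : S → ℝ} {α : ℝ} {f : S → A → S}
  {πst : S → A → ℝ} {K : S → ℝ}

theorem Rbar1Det_eq_of_weight_eq
    (hweight : ∀ s s', N s s' * Real.exp (α * (V s' - V s)) = K s * nextStateProb f πst s s')
    (π : S → A → ℝ) :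
    Rbar1Det d N V α f π = ∑ s, (d s : EReal) *
      ∑ s', ((K s * nextStateProb f πst s s' : ℝ) : EReal) * elog (nextStateProb f π s s') := by
  simp only [Rbar1Det, hweight, nextStateProb]

theorem Rbar1Det_le_of_weight_eq
    (hweight : ∀ s s', N s s' * Real.exp (α * (V s' - V s)) = K s * nextStateProb f πst s s')
    (hK : ∀ s, 0 < K s) (hd : ∀ s, 0 ≤ d s) {π : S → A → ℝ} (hπ : ∀ s a, 0 ≤ π s a)
    (hπst : ∀ s a, 0 ≤ πst s a) (hsum : ∀ s, ∑ a, π s a ≤ ∑ a, πst s a) :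
    Rbar1Det d N V α f π ≤ Rbar1Det d N V α f πst := by
  rw [Rbar1Det_eq_of_weight_eq hweight, Rbar1Det_eq_of_weight_eq hweight]
  refine Finset.sum_le_sum fun s _ => mul_le_mul_of_nonneg_left ?_ (EReal.coe_nonneg.2 (hd s))
  refine sum_coe_mul_elog_le (hK s) (nextStateProb_nonneg f (hπ s))
    (nextStateProb_nonneg f (hπst s)) ?_
  simpa only [sum_nextStateProb] using hsum s

theorem Rbar1Det_eq_coe_of_weight_eq
    (hweight : ∀ s s', N s s' * Real.exp (α * (V s' - V s)) = K s * nextStateProb f πst s s') :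
    Rbar1Det d N V α f πst = ((∑ s, d s * ∑ s', K s * nextStateProb f πst s s' *
      Real.log (nextStateProb f πst s s') : ℝ) : EReal) := by
  rw [Rbar1Det_eq_of_weight_eq hweight, EReal.coe_finset_sum]
  refine Finset.sum_congr rfl fun s _ => ?_
  rw [sum_coe_mul_elog_self, EReal.coe_mul]

end NextState

theorem stmt8_general {S A : Type*} [Fintype S] [Fintype A]
    (f : S → A → S)
    (d : S → ℝ) (hd0 : ∀ s, 0 ≤ d s)
    (β : S → A → ℝ) (hβ0 : ∀ s a, 0 ≤ β s a) (hβ1 : ∀ s, ∑ a, β s a = 1)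
    (N : S → S → ℝ)
    (hN : ∀ s s', N s s' = ∑ a, β s a * (if f s a = s' then (1 : ℝ) else 0))
    (V : S → ℝ) (α : ℝ)
    (Z : S → ℝ) (hZ : ∀ s, Z s = ∑ s', Real.exp (α * V s') * N s s')
    (πst : S → A → ℝ)
    (hπst : ∀ s a, πst s a = Real.exp (α * V (f s a)) * β s a / Z s) :
    (∀ π : S → A → ℝ, (∀ s a, 0 ≤ π s a) → (∀ s, ∑ a, π s a = 1) →
      Rbar1Det d N V α f π ≤ Rbar1Det d N V α f πst) ∧
    (∃ r : ℝ, Rbar1Det d N V α f πst = (r : EReal)) := by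
  replace hN : ∀ s s', N s s' = nextStateProb f β s s' := hN
  have hZ_pos (s : S) : 0 < Z s := by
    simpa only [hZ, hN] using
      sum_mul_nextStateProb_pos f (hβ0 s) (hβ1 s) fun s' => Real.exp_pos (α * V s')
  have hπst_eq : πst = fun s a => Real.exp (α * V (f s a)) / Z s * β s a :=
    funext₂ fun s a => by rw [hπst]; ring
  have hq (s s' : S) : nextStateProb f πst s s' = Real.exp (α * V s') * N s s' / Z s := by
    rw [hπst_eq, nextStateProb_mul_comp f (fun s s' => Real.exp (α * V s') / Z s), hN]
    ring
  have hweight (s s' : S) : N s s' * Real.exp (α * (V s' - V s)) =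
      Real.exp (-(α * V s)) * Z s * nextStateProb f πst s s' := by
    rw [hq, mul_sub, Real.exp_sub, Real.exp_neg]
    field_simp [(hZ_pos s).ne']
  have hπst_nonneg (s : S) (a : A) : 0 ≤ πst s a :=
    hπst s a ▸ div_nonneg (mul_nonneg (Real.exp_pos _).le (hβ0 s a)) (hZ_pos s).le
  have hπst_sum (s : S) : ∑ a, πst s a = 1 := by
    rw [← sum_nextStateProb f, Finset.sum_congr rfl fun s' _ => hq s s', ← Finset.sum_div, ← hZ,
      div_self (hZ_pos s).ne']
  have hK (s : S) : 0 < Real.exp (-(α * V s)) * Z s := mul_pos (Real.exp_pos _) (hZ_pos s)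
  exact ⟨fun π hπ hπ_sum => Rbar1Det_le_of_weight_eq hweight hK hd0 hπ hπst_nonneg
      fun s => ((hπ_sum s).trans (hπst_sum s).symm).le,
    _, Rbar1Det_eq_coe_of_weight_eq hweight⟩

/-- in the deterministic tabular setting, the value-aware policy `π*` globally
maximizes `R̄₁`, and `R̄₁(π*)` is a real number (in particular `R̄₁(π*) > −∞`). -/
theorem stmt8 {S A : Type*} [Fintype S] [Fintype A] [Nonempty S] [Nonempty A]
    (f : S → A → S)
    (d : S → ℝ) (hd0 : ∀ s, 0 ≤ d s) (hd1 : ∑ s, d s = 1)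
    (β : S → A → ℝ) (hβ0 : ∀ s a, 0 ≤ β s a) (hβ1 : ∀ s, ∑ a, β s a = 1)
    (N : S → S → ℝ)
    (hN : ∀ s s', N s s' = ∑ a, β s a * (if f s a = s' then (1 : ℝ) else 0))
    (V : S → ℝ) (α : ℝ)
    (Z : S → ℝ) (hZ : ∀ s, Z s = ∑ s', Real.exp (α * V s') * N s s')
    (πst : S → A → ℝ)
    (hπst : ∀ s a, πst s a = Real.exp (α * V (f s a)) * β s a / Z s) :
    (∀ π : S → A → ℝ, (∀ s a, 0 ≤ π s a) → (∀ s, ∑ a, π s a = 1) →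
      Rbar1Det d N V α f π ≤ Rbar1Det d N V α f πst) ∧
    (∃ r : ℝ, Rbar1Det d N V α f πst = (r : EReal)) :=
  stmt8_general f d hd0 β hβ0 hβ1 N hN V α Z hZ πst hπst
end

section
/- In the stochastic tabular setting, for every policy π, R̄₁(π_in) ≥ R̄₁(π), the inequality holding in the extended reals, where π_in is the projection of π onto the support of the behavior policy β. -/
open scoped BigOperators Classical

/-- The regularizer
`R̄₁(π) = Σ_s d(s)·Σ_{s'} N(s'|s)·exp(α(V(s')−V(s)))·log(Σ_a M(s'|s,a)·π(a|s))`,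
valued in the extended reals. -/
noncomputable def Rbar1Sto {S A : Type*} [Fintype S] [Fintype A]
    (d : S → ℝ) (N : S → S → ℝ) (V : S → ℝ) (α : ℝ)
    (M : S → A → S → ℝ) (π : S → A → ℝ) : EReal :=
  ∑ s, (d s : EReal) *
    ∑ s', ((N s s' * Real.exp (α * (V s' - V s)) : ℝ) : EReal) *
      elog (∑ a, M s a s' * π s a)

/-!
Projection moves the mass `ε(s)` from actions outside the support of `β`, which `M` ignores,
onto actions inside it, so every mixture `Σ_a M(s'|s,a) π(a|s)` can only grow. The regularizer
is monotone in these mixtures: `log` is monotone on `[0, ∞)` (with `log 0 = −∞`) and the weights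
`d(s) N(s'|s) exp(α(V(s') − V(s)))` are nonnegative.
-/

lemma elog_le_elog {x y : ℝ} (hx : 0 ≤ x) (hxy : x ≤ y) : elog x ≤ elog y := by
  unfold elog
  rcases hx.eq_or_lt with h | h
  · simp [← h]
  · rw [if_neg h.ne', if_neg (h.trans_le hxy).ne']
    exact_mod_cast Real.log_le_log h hxy

lemma Rbar1Sto_le_Rbar1Sto {S A : Type*} [Fintype S] [Fintype A]
    {d : S → ℝ} {N : S → S → ℝ} {V : S → ℝ} {α : ℝ} {M : S → A → S → ℝ}
    {π π' : S → A → ℝ} (hd : ∀ s, 0 ≤ d s) (hN : ∀ s s', 0 ≤ N s s')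
    (hmix0 : ∀ s s', 0 ≤ ∑ a, M s a s' * π s a)
    (hmix : ∀ s s', ∑ a, M s a s' * π s a ≤ ∑ a, M s a s' * π' s a) :
    Rbar1Sto d N V α M π ≤ Rbar1Sto d N V α M π' := by
  refine Finset.sum_le_sum fun s _ ↦ mul_le_mul_of_nonneg_left ?_ (by exact_mod_cast hd s)
  refine Finset.sum_le_sum fun s' _ ↦ mul_le_mul_of_nonneg_left ?_ ?_
  · exact elog_le_elog (hmix0 s s') (hmix s s')
  · exact_mod_cast mul_nonneg (hN s s') (Real.exp_pos _).le

theorem stmt12_general {S A : Type*} [Fintype S] [Fintype A]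
    (d : S → ℝ) (hd0 : ∀ s, 0 ≤ d s)
    (β : S → A → ℝ) (hβ0 : ∀ s a, 0 ≤ β s a)
    (M : S → A → S → ℝ) (hM0 : ∀ s a s', 0 ≤ M s a s')
    (hMzero : ∀ s a, β s a = 0 → ∀ s', M s a s' = 0)
    (N : S → S → ℝ) (hN : ∀ s s', N s s' = ∑ a, β s a * M s a s')
    (V : S → ℝ) (α : ℝ)
    (π : S → A → ℝ) (hπ0 : ∀ s a, 0 ≤ π s a)
    (ε : S → ℝ) (hε : ∀ s, ε s = ∑ a ∈ Finset.univ.filter (fun a => β s a = 0), π s a)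
    (n : S → ℕ)
    (πin : S → A → ℝ)
    (hπin : ∀ s a, πin s a = if 0 < β s a then π s a + ε s / n s else 0) :
    Rbar1Sto d N V α M π ≤ Rbar1Sto d N V α M πin := by
  have hε0 (s : S) : 0 ≤ ε s := hε s ▸ Finset.sum_nonneg fun a _ ↦ hπ0 s a
  have hπ_le (s : S) (a : A) (hβ : 0 < β s a) : π s a ≤ πin s a := by
    rw [hπin, if_pos hβ]
    exact le_add_of_nonneg_right (div_nonneg (hε0 s) (n s).cast_nonneg)
  have hmix_le (s s' : S) (a : A) : M s a s' * π s a ≤ M s a s' * πin s a := by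
    rcases (hβ0 s a).eq_or_lt with hβ | hβ
    · simp [hMzero s a hβ.symm s']
    · exact mul_le_mul_of_nonneg_left (hπ_le s a hβ) (hM0 s a s')
  refine Rbar1Sto_le_Rbar1Sto hd0 (fun s s' ↦ ?_) (fun s s' ↦ ?_)
    (fun s s' ↦ Finset.sum_le_sum fun a _ ↦ hmix_le s s' a)
  · exact hN s s' ▸ Finset.sum_nonneg fun a _ ↦ mul_nonneg (hβ0 s a) (hM0 s a s')
  · exact Finset.sum_nonneg fun a _ ↦ mul_nonneg (hM0 s a s') (hπ0 s a)

/-- in the stochastic tabular setting, projecting a policy onto the support of the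
behavior policy does not decrease the regularizer: `R̄₁(π_in) ≥ R̄₁(π)`. -/
theorem stmt12 {S A : Type*} [Fintype S] [Fintype A] [Nonempty S] [Nonempty A]
    (d : S → ℝ) (hd0 : ∀ s, 0 ≤ d s) (hd1 : ∑ s, d s = 1)
    (β : S → A → ℝ) (hβ0 : ∀ s a, 0 ≤ β s a) (hβ1 : ∀ s, ∑ a, β s a = 1)
    (M : S → A → S → ℝ) (hM0 : ∀ s a s', 0 ≤ M s a s')
    (hMzero : ∀ s a, β s a = 0 → ∀ s', M s a s' = 0)
    (hMpmf : ∀ s a, 0 < β s a → ∑ s', M s a s' = 1)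
    (N : S → S → ℝ) (hN : ∀ s s', N s s' = ∑ a, β s a * M s a s')
    (V : S → ℝ) (α : ℝ)
    (π : S → A → ℝ) (hπ0 : ∀ s a, 0 ≤ π s a) (hπ1 : ∀ s, ∑ a, π s a = 1)
    (ε : S → ℝ) (hε : ∀ s, ε s = ∑ a ∈ Finset.univ.filter (fun a => β s a = 0), π s a)
    (n : S → ℕ) (hn : ∀ s, n s = (Finset.univ.filter (fun a => 0 < β s a)).card)
    (πin : S → A → ℝ)
    (hπin : ∀ s a, πin s a = if 0 < β s a then π s a + ε s / n s else 0) :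
    Rbar1Sto d N V α M π ≤ Rbar1Sto d N V α M πin :=
  stmt12_general d hd0 β hβ0 M hM0 hMzero N hN V α π hπ0 ε hε n πin hπin
end
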